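/- Define f_t(A) := ∫_A [ sup_{w ∈ B_2(v, 4δ_t)} λ_{d−2}((w + L^⊥) ∩ W)² − inf_{w ∈ B_2(v, 4δ_t)} λ_{d−2}((w + L^⊥) ∩ W_{−3δ_t})² ] dv for Borel sets A ⊂ W_L. Then 0 ≤ f_t(A) ≤ f_t(W_L) = O(δ_t) for all Borel sets A ⊂ W_L as δ_t tends to zero. -/

import Mathlib

open MeasureTheory Filter Asymptotics ProbabilityTheory
open scoped ENNReal NNReal Topology Classical RealInnerProductSpace Pointwise

noncomputable section

/-- `Euc d` is the Euclidean space `ℝ^d`. -/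
abbrev Euc (d : ℕ) : Type := EuclideanSpace ℝ (Fin d)

/-- `κ_n`, the volume of the `n`-dimensional unit ball. -/
def unitBallVol (n : ℕ) : ℝ := Real.pi ^ ((n : ℝ) / 2) / Real.Gamma ((n : ℝ) / 2 + 1)

/-- The Beta function `B(a,b) = Γ(a)Γ(b)/Γ(a+b)`. -/
def betaFn (a b : ℝ) : ℝ := Real.Gamma a * Real.Gamma b / Real.Gamma (a + b)

/-- The constant `c_d = 8 π κ_{d-2}² B(3, d/2)²`. -/
def cdConst (d : ℕ) : ℝ := 8 * Real.pi * unitBallVol (d - 2) ^ 2 * betaFn 3 ((d : ℝ) / 2) ^ 2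

/-- The constant `c_d' = π κ_{d-2}³ B(3, d/2)² B(4, d/2)`. -/
def cdConst' (d : ℕ) : ℝ :=
  Real.pi * unitBallVol (d - 2) ^ 3 * betaFn 3 ((d : ℝ) / 2) ^ 2 * betaFn 4 ((d : ℝ) / 2)

variable {d : ℕ}

/-- Orthogonal projection onto the plane (submodule) `L`, viewed as a map `ℝ^d → ℝ^d`. -/
def projL (L : Submodule ℝ (Euc d)) (x : Euc d) : Euc d := (Submodule.orthogonalProjection L x : Euc d)

/-- `λ_{d-2}((v + L^⊥) ∩ W)`, the `(d-2)`-dimensional (Hausdorff) measure of the slice of `W`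
through `v` orthogonal to `L`. -/
def sliceVol (L : Submodule ℝ (Euc d)) (W : Set (Euc d)) (v : Euc d) : ℝ≥0∞ :=
  μH[(d : ℝ) - 2] ((v +ᵥ ((Lᗮ : Submodule ℝ (Euc d)) : Set (Euc d))) ∩ W)

/-- The inner parallel set `W_{-r} = {x : x + r B_d ⊆ W}`. -/
def innerParallel (W : Set (Euc d)) (r : ℝ) : Set (Euc d) :=
  {x | Metric.closedBall x r ⊆ W}

/-- The projection of the segment `[v,w]` onto the plane `L`. -/
def segProj (L : Submodule ℝ (Euc d)) (v w : Euc d) : Set (Euc d) :=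
  projL L '' segment ℝ v w

/-- The quadruple `(v1, v2, w1, w2)` gives two edges (`‖v1-v2‖ ≤ δ`, `‖w1-w2‖ ≤ δ`) whose
projections onto `L` cross inside `A`. -/
def CrossIn (L : Submodule ℝ (Euc d)) (δ : ℝ) (A : Set (Euc d))
    (q : Euc d × Euc d × Euc d × Euc d) : Prop :=
  dist q.1 q.2.1 ≤ δ ∧ dist q.2.2.1 q.2.2.2 ≤ δ ∧
    (segProj L q.1 q.2.1 ∩ segProj L q.2.2.1 q.2.2.2 ∩ A).Nonempty

/-- All ordered quadruples of *distinct* points (distinct as occurrences) of a configuration. -/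
def quadruples (m : Multiset (Euc d)) : Multiset (Euc d × Euc d × Euc d × Euc d) :=
  m.bind fun a => (m.erase a).bind fun b => ((m.erase a).erase b).bind fun c =>
    (((m.erase a).erase b).erase c).map fun e => (a, b, c, e)

/-- `ξ_t(A)`: one eighth of the number of ordered quadruples of distinct vertices forming a
crossing in `A`. -/
def crossCount (L : Submodule ℝ (Euc d)) (δ : ℝ) (A : Set (Euc d))
    (m : Multiset (Euc d)) : ℝ :=
  ((quadruples m).filter (CrossIn L δ A)).card / 8

/-- The stress `S(a,b)` between two vertices. -/
def stressPair (L : Submodule ℝ (Euc d)) (wt : Euc d → Euc d → ℝ) (a b : Euc d) : ℝ :=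
  wt a b * (dist a b - dist (projL L a) (projL L b)) ^ 2

/-- The total stress `(1/2) Σ_{(v1,v2) distinct} S(v1,v2)` of a configuration. -/
def stressM (L : Submodule ℝ (Euc d)) (wt : Euc d → Euc d → ℝ) (m : Multiset (Euc d)) : ℝ :=
  (1 / 2) * (((m ×ˢ m).map fun p => stressPair L wt p.1 p.2).sum
    - (m.map fun a => stressPair L wt a a).sum)

/-- First order difference operator `D_x f(μ) = f(μ + δ_x) - f(μ)`. -/
def Dop (x : Euc d) (f : Multiset (Euc d) → ℝ) (m : Multiset (Euc d)) : ℝ :=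
  f (x ::ₘ m) - f m

/-- Second order difference operator. -/
def Dop2 (x y : Euc d) (f : Multiset (Euc d) → ℝ) (m : Multiset (Euc d)) : ℝ :=
  f (x ::ₘ y ::ₘ m) - f (y ::ₘ m) - f (x ::ₘ m) + f m

/-- Number of points of the configuration `m` lying in `A`. -/
def countIn (A : Set (Euc d)) (m : Multiset (Euc d)) : ℕ := (m.filter (· ∈ A)).card

/-- The Poisson distribution with mean `r` on `ℕ`. -/
def poissonNat (r : ℝ) : Measure ℕ :=
  Measure.sum fun n => ENNReal.ofReal (Real.exp (-r) * r ^ n / n.factorial) • Measure.dirac n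

/-- `V` is a Poisson point process with intensity measure `μ` under `P`: for pairwise disjoint
measurable sets the counts are independent Poisson random variables. -/
def IsPoissonPP {Ω : Type} [MeasurableSpace Ω] (P : Measure Ω)
    (V : Ω → Multiset (Euc d)) (μ : Measure (Euc d)) : Prop :=
  ∀ (n : ℕ) (A : Fin n → Set (Euc d)), (∀ i, MeasurableSet (A i)) →
    Pairwise (Function.onFun Disjoint A) →
    P.map (fun ω i => countIn (A i) (V ω)) = Measure.pi fun i => poissonNat (μ (A i)).toReal

/-- Expectation. -/
def meanP {Ω : Type} [MeasurableSpace Ω] (P : Measure Ω) (f : Ω → ℝ) : ℝ := ∫ ω, f ω ∂P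

/-- Covariance. -/
def covP {Ω : Type} [MeasurableSpace Ω] (P : Measure Ω) (f g : Ω → ℝ) : ℝ :=
  ∫ ω, (f ω - meanP P f) * (g ω - meanP P g) ∂P

/-- The error term `f_t(A)`: the integral over `A` of the gap between the squared supremum
slice volume of `W` and the squared infimum slice volume of `W_{-3δ_t}`. -/
def ftErr (d : ℕ) (L : Submodule ℝ (Euc d)) (W : Set (Euc d)) (δt : ℝ)
    (A : Set (Euc d)) : ℝ≥0∞ :=
  ∫⁻ v in A,
    ((⨆ w ∈ Metric.closedBall v (4 * δt) ∩ (L : Set (Euc d)), sliceVol L W w) ^ 2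
      - (⨅ w ∈ Metric.closedBall v (4 * δt) ∩ (L : Set (Euc d)),
          sliceVol L (innerParallel W (3 * δt)) w) ^ 2) ∂μH[(2 : ℝ)]

/-!
Fix `x` with `B(x, r) ⊆ W` and put `s = 7δ/r`. By convexity the homothetic copies
`W⁺ = x + (1 + s)(W - x)` and `W⁻ = x + (1 - s)(W - x)` satisfy `W + 7δ B_d ⊆ W⁺` and
`W⁻ ⊆ W_{-7δ}`. Since `4δ + 3δ = 7δ`, translation invariance of Hausdorff measure bounds, for every
`w` within `4δ` of `v`, the slice of `W` through `w` by the slice of `W⁺` through `v`, and the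
slice of `W_{-3δ}` through `w` from below by the slice of `W⁻` through `v`. Slices of a homothetic
copy scale by `c^(d-2)` and areas in `L` by `c²`, so `∫_L λ_{d-2}(slice of W^±)² = (1 ± s)^(2d-2) I`
with `I = ∫_L λ_{d-2}(slice of W)² < ∞`. Hence `f_t(W_L) ≤ ((1+s)^(2d-2) - (1-s)^(2d-2)) I = O(δ)`;
monotonicity in `A` is monotonicity of the integral.
-/

section Homothety

variable {k E : Type*} [Field k] [AddCommGroup E] [Module k E]

theorem AffineMap.homothety_image_vadd_submodule (K : Submodule k E) (x u : E) {c : k}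
    (hc : c ≠ 0) :
    homothety x c '' (u +ᵥ (K : Set E)) = homothety x c u +ᵥ (K : Set E) := by
  ext z
  simp only [Set.mem_image, Set.mem_vadd_set, SetLike.mem_coe, vadd_eq_add, homothety_apply,
    vsub_eq_sub]
  constructor
  · rintro ⟨_, ⟨w, hw, rfl⟩, rfl⟩
    exact ⟨c • w, K.smul_mem c hw, by module⟩
  · rintro ⟨w, hw, rfl⟩
    refine ⟨u + c⁻¹ • w, ⟨c⁻¹ • w, K.smul_mem _ hw, rfl⟩, ?_⟩
    rw [add_sub_right_comm, smul_add, smul_smul, mul_inv_cancel₀ hc, one_smul]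
    abel

theorem AffineMap.homothety_preimage_submodule (K : Submodule k E) {p : E} (hp : p ∈ K) {c : k}
    (hc : c ≠ 0) : homothety p c ⁻¹' (K : Set E) = K := by
  ext y
  simp only [Set.mem_preimage, SetLike.mem_coe, homothety_apply, vsub_eq_sub, vadd_eq_add,
    K.add_mem_iff_left hp, K.smul_mem_iff hc, K.sub_mem_iff_left hp]

end Homothety

section HausdorffMeasure

variable {E : Type*} [NormedAddCommGroup E] [NormedSpace ℝ E] [MeasurableSpace E] [BorelSpace E]

theorem MeasureTheory.setLIntegral_comp_homothety {a : ℝ} (ha : 0 ≤ a) (p : E) {c : ℝ}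
    (hc : c ≠ 0) {s : Set E} (hs : AffineMap.homothety p c ⁻¹' s = s) (g : E → ℝ≥0∞) :
    ∫⁻ v in s, g (AffineMap.homothety p c v) ∂μH[a]
      = ((‖c‖₊⁻¹ ^ a : ℝ≥0) : ℝ≥0∞) * ∫⁻ v in s, g v ∂μH[a] := by
  let e : E ≃ᵐ E :=
    { toEquiv := (AffineEquiv.homothetyUnitsMulHom p (Units.mk0 c hc)).toEquiv
      measurable_toFun := (AffineMap.homothety_continuous p c).measurable
      measurable_invFun := (AffineMap.homothety_continuous p c⁻¹).measurable }
  have he : ⇑e = AffineMap.homothety p c := rfl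
  conv_lhs => rw [← hs, ← he, ← lintegral_map_equiv, ← e.restrict_map]
  rw [he, map_homothety_hausdorffMeasure ha p hc, Measure.restrict_smul, lintegral_smul_measure,
    ENNReal.smul_def, smul_eq_mul]

theorem MeasureTheory.hausdorffMeasure_lt_top_of_subset_submodule (K : Submodule ℝ E)
    [FiniteDimensional ℝ K] {s : Set E} (hsK : s ⊆ K) (hs : Bornology.IsBounded s) :
    μH[Module.finrank ℝ K] s < ⊤ := by
  have himage : Subtype.val '' (Subtype.val ⁻¹' s : Set K) = s :=
    Set.image_preimage_eq_of_subset (by simpa using hsK)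
  rw [← himage, isometry_subtype_coe.hausdorffMeasure_image (Or.inl (Nat.cast_nonneg _))]
  exact (isometry_subtype_coe.antilipschitz.isBounded_preimage hs).measure_lt_top

end HausdorffMeasure

section Convex

variable {E : Type*} [NormedAddCommGroup E] [NormedSpace ℝ E] {W : Set E} {x : E} {r ε : ℝ}

theorem Convex.vadd_subset_homothety_of_closedBall_subset (hW : Convex ℝ W)
    (hball : Metric.closedBall x r ⊆ W) (hr : 0 < r) (hε : 0 < ε) {b : E} (hb : ‖b‖ ≤ ε) :
    b +ᵥ W ⊆ AffineMap.homothety x (1 + ε / r) '' W := by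
  rintro _ ⟨y, hy, rfl⟩
  set s := ε / r
  have hs : 0 < s := div_pos hε hr
  have hxb : x + s⁻¹ • b ∈ W := hball <| by
    rw [Metric.mem_closedBall, dist_self_add_left, norm_smul, Real.norm_of_nonneg (by positivity),
      inv_div, div_mul_eq_mul_div, div_le_iff₀ hε]
    exact mul_le_mul_of_nonneg_left hb hr.le
  refine ⟨(1 + s)⁻¹ • y + (s / (1 + s)) • (x + s⁻¹ • b),
    hW hy hxb (by positivity) (by positivity) (by field_simp), ?_⟩
  simp only [AffineMap.homothety_apply, vsub_eq_sub, vadd_eq_add]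
  match_scalars <;> field_simp
  ring

theorem Convex.closedBall_homothety_subset_of_closedBall_subset (hW : Convex ℝ W)
    (hball : Metric.closedBall x r ⊆ W) (hε : 0 < ε) (hεr : ε ≤ r) {y : E} (hy : y ∈ W) :
    Metric.closedBall (AffineMap.homothety x (1 - ε / r) y) ε ⊆ W := by
  intro z hz
  have hr : 0 < r := hε.trans_le hεr
  have hs : 0 < ε / r := div_pos hε hr
  have hxb : x + (ε / r)⁻¹ • (z - AffineMap.homothety x (1 - ε / r) y) ∈ W := hball <| by
    rw [Metric.mem_closedBall, dist_self_add_left, norm_smul, Real.norm_of_nonneg (by positivity),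
      ← dist_eq_norm, inv_div, div_mul_eq_mul_div, div_le_iff₀ hε]
    exact mul_le_mul_of_nonneg_left (Metric.mem_closedBall.1 hz) hr.le
  convert hW hy hxb (sub_nonneg.2 ((div_le_one hr).2 hεr)) hs.le (by ring) using 1
  simp only [AffineMap.homothety_apply, vsub_eq_sub, vadd_eq_add]
  match_scalars <;> field_simp <;> ring

end Convex

theorem MeasureTheory.lintegral_tsub_le_tsub_lintegral {α : Type*} [MeasurableSpace α]
    {μ : Measure α} {f g : α → ℝ≥0∞} (hgf : g ≤ f) (hg : ∫⁻ a, g a ∂μ ≠ ⊤) :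
    ∫⁻ a, f a - g a ∂μ ≤ ∫⁻ a, f a ∂μ - ∫⁻ a, g a ∂μ :=
  ENNReal.le_sub_of_add_le_right hg <| (le_lintegral_add _ _).trans <|
    lintegral_mono fun a => (tsub_add_cancel_of_le (hgf a)).le

theorem pow_one_add_sub_pow_one_sub_le (n : ℕ) {s : ℝ} (hs₀ : 0 ≤ s) (hs₁ : s ≤ 1) :
    (1 + s) ^ n - (1 - s) ^ n ≤ n * 2 ^ n * s := by
  have hmax : max |1 + s| |1 - s| ≤ 2 :=
    max_le (by rw [abs_le]; constructor <;> linarith) (by rw [abs_le]; constructor <;> linarith)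
  calc (1 + s) ^ n - (1 - s) ^ n ≤ |(1 + s) - (1 - s)| * n * max |1 + s| |1 - s| ^ (n - 1) :=
        (le_abs_self _).trans (abs_pow_sub_pow_le _ _ _)
    _ ≤ 2 * s * n * 2 ^ (n - 1) := by
        rw [show (1 + s) - (1 - s) = 2 * s by ring, abs_of_nonneg (by positivity)]
        gcongr
    _ ≤ n * 2 ^ n * s := by
        rcases n with _ | n
        · simp
        · rw [pow_succ, Nat.add_sub_cancel]
          linarith

section Slice

variable (L : Submodule ℝ (Euc d))

def sliceSqIntegral (W : Set (Euc d)) : ℝ≥0∞ :=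
  ∫⁻ v in (L : Set (Euc d)), sliceVol L W v ^ 2 ∂μH[(2 : ℝ)]

theorem two_le_of_finrank_eq_two (hL : Module.finrank ℝ L = 2) : 2 ≤ d := by
  simpa [hL] using L.finrank_le

theorem sliceVol_mono {W₁ W₂ : Set (Euc d)} (h : W₁ ⊆ W₂) (v : Euc d) :
    sliceVol L W₁ v ≤ sliceVol L W₂ v :=
  measure_mono (Set.inter_subset_inter_right _ h)

theorem sliceVol_le_of_vadd_subset {W₁ W₂ : Set (Euc d)} {b : Euc d} (h : b +ᵥ W₁ ⊆ W₂)
    (v : Euc d) : sliceVol L W₁ v ≤ sliceVol L W₂ (b + v) := by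
  rw [sliceVol, ← hausdorffMeasure_vadd b (Or.inr (AddAction.surjective b)), Set.vadd_set_inter,
    vadd_vadd]
  exact measure_mono (Set.inter_subset_inter_right _ h)

theorem sliceVol_add_of_mem_orthogonal (W : Set (Euc d)) (v : Euc d) {τ : Euc d} (hτ : τ ∈ Lᗮ) :
    sliceVol L W (v + τ) = sliceVol L W v := by
  rw [sliceVol, sliceVol, ← vadd_vadd, vadd_coe_set hτ]

theorem sliceVol_of_mem_orthogonal (W : Set (Euc d)) {u : Euc d} (hu : u ∈ Lᗮ) :
    sliceVol L W u = μH[(d : ℝ) - 2] ((Lᗮ : Set (Euc d)) ∩ W) := by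
  rw [← zero_add u, sliceVol_add_of_mem_orthogonal L W 0 hu, sliceVol, zero_vadd]

theorem sliceVol_homothety_image (hd : 2 ≤ d) (W : Set (Euc d)) (x v : Euc d) {c : ℝ}
    (hc : c ≠ 0) :
    sliceVol L (AffineMap.homothety x c '' W) (AffineMap.homothety x c v)
      = ‖c‖ₑ ^ (d - 2) * sliceVol L W v := by
  rw [sliceVol, ← AffineMap.homothety_image_vadd_submodule _ _ _ hc,
    ← Set.image_inter (f := AffineMap.homothety x c)
      (AffineEquiv.homothetyUnitsMulHom x (Units.mk0 c hc)).injective,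
    hausdorffMeasure_homothety_image (by simpa using hd) x hc, ENNReal.smul_def, smul_eq_mul,
    sliceVol]
  congr 1
  rw [show (d : ℝ) - 2 = (d - 2 : ℕ) by push_cast [hd]; rfl, NNReal.rpow_natCast, ENNReal.coe_pow,
    enorm_eq_nnnorm]

theorem sliceSqIntegral_homothety_image (hd : 2 ≤ d) (W : Set (Euc d)) (x : Euc d) {c : ℝ}
    (hc : c ≠ 0) :
    sliceSqIntegral L (AffineMap.homothety x c '' W)
      = ‖c‖ₑ ^ (2 * d - 2) * sliceSqIntegral L W := by
  set p := projL L x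
  have hp : p ∈ L := Submodule.coe_mem _
  -- the centre can be moved into `L`, since slices only see the `L`-component of a point
  have hslice : ∀ v, sliceVol L (AffineMap.homothety x c '' W) v
      = ‖c‖ₑ ^ (d - 2) * sliceVol L W (AffineMap.homothety p c⁻¹ v) := by
    intro v
    have hτ : AffineMap.homothety x c⁻¹ v - AffineMap.homothety p c⁻¹ v ∈ Lᗮ := by
      have hxp : x - p ∈ Lᗮ := Submodule.sub_starProjection_mem_orthogonal x
      convert Lᗮ.smul_mem (1 - c⁻¹) hxp using 1
      simp only [AffineMap.homothety_apply, vsub_eq_sub, vadd_eq_add]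
      module
    rw [← sliceVol_add_of_mem_orthogonal L W _ hτ, add_sub_cancel,
      ← sliceVol_homothety_image L hd W x _ hc, ← AffineMap.homothety_mul_apply,
      mul_inv_cancel₀ hc, AffineMap.homothety_one, AffineMap.id_apply]
  calc sliceSqIntegral L (AffineMap.homothety x c '' W)
      = ∫⁻ v in (L : Set (Euc d)),
          (‖c‖ₑ ^ (d - 2)) ^ 2 * sliceVol L W (AffineMap.homothety p c⁻¹ v) ^ 2 ∂μH[(2 : ℝ)] := by
        simp_rw [sliceSqIntegral, hslice, mul_pow]
    _ = (‖c‖ₑ ^ (d - 2)) ^ 2 * (‖c‖ₑ ^ 2 * sliceSqIntegral L W) := by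
        rw [lintegral_const_mul' _ _ (by simp), setLIntegral_comp_homothety zero_le_two p
          (inv_ne_zero hc) (AffineMap.homothety_preimage_submodule L hp (inv_ne_zero hc))
          (fun v => sliceVol L W v ^ 2), nnnorm_inv,
          inv_inv, NNReal.rpow_two, ENNReal.coe_pow, enorm_eq_nnnorm, sliceSqIntegral]
    _ = ‖c‖ₑ ^ (2 * d - 2) * sliceSqIntegral L W := by
        rw [← mul_assoc, ← pow_mul, ← pow_add]
        congr 2
        omega

theorem sliceVol_le_of_subset_closedBall {W : Set (Euc d)} {R : ℝ}
    (hW : W ⊆ Metric.closedBall 0 R) (v : Euc d) :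
    sliceVol L W v ≤ μH[(d : ℝ) - 2] ((Lᗮ : Set (Euc d)) ∩ Metric.closedBall 0 (2 * R)) := by
  rcases ((v +ᵥ (Lᗮ : Set (Euc d))) ∩ W).eq_empty_or_nonempty with h | ⟨y, hyv, hyW⟩
  · simp [sliceVol, h]
  have hsub : -y +ᵥ W ⊆ Metric.closedBall 0 (2 * R) := by
    rintro _ ⟨z, hz, rfl⟩
    have hy := mem_closedBall_zero_iff.1 (hW hyW)
    have hz := mem_closedBall_zero_iff.1 (hW hz)
    rw [mem_closedBall_zero_iff]
    calc ‖-y + z‖ ≤ ‖-y‖ + ‖z‖ := norm_add_le _ _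
      _ ≤ 2 * R := by rw [norm_neg]; linarith
  have hτ : -y + v ∈ Lᗮ := by
    have := Lᗮ.neg_mem (Set.mem_vadd_set_iff_neg_vadd_mem.1 hyv)
    rwa [vadd_eq_add, neg_add, neg_neg, add_comm] at this
  exact (sliceVol_le_of_vadd_subset L hsub v).trans_eq (sliceVol_of_mem_orthogonal L _ hτ)

theorem sliceVol_eq_zero_of_subset_closedBall {W : Set (Euc d)} {R : ℝ}
    (hW : W ⊆ Metric.closedBall 0 R) {v : Euc d} (hv : v ∈ L) (hvR : R < ‖v‖) :
    sliceVol L W v = 0 := by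
  have hempty : (v +ᵥ (Lᗮ : Set (Euc d))) ∩ W = ∅ := by
    refine Set.eq_empty_iff_forall_notMem.2 ?_
    rintro _ ⟨⟨τ, hτ, rfl⟩, hyW⟩
    have hy := mem_closedBall_zero_iff.1 (hW hyW)
    have hpyth := norm_add_sq_eq_norm_sq_add_norm_sq_real
      (Submodule.inner_right_of_mem_orthogonal hv hτ)
    change ‖v + τ‖ ≤ R at hy
    nlinarith [norm_nonneg v, norm_nonneg (v + τ), sq_nonneg ‖τ‖]
  rw [sliceVol, hempty, measure_empty]

theorem sliceSqIntegral_lt_top (hL : Module.finrank ℝ L = 2) {W : Set (Euc d)}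
    (hW : Bornology.IsBounded W) : sliceSqIntegral L W < ⊤ := by
  obtain ⟨R, hR⟩ := hW.subset_closedBall 0
  set M := μH[(d : ℝ) - 2] ((Lᗮ : Set (Euc d)) ∩ Metric.closedBall 0 (2 * R)) with hMdef
  have hM : M < ⊤ := by
    have hdim : (Module.finrank ℝ Lᗮ : ℝ) = (d : ℝ) - 2 := by
      have := L.finrank_add_finrank_orthogonal
      rw [hL, finrank_euclideanSpace_fin] at this
      have : (2 : ℝ) + Module.finrank ℝ Lᗮ = d := by exact_mod_cast this
      linarith
    rw [hMdef, ← hdim]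
    exact hausdorffMeasure_lt_top_of_subset_submodule Lᗮ Set.inter_subset_left
      (Metric.isBounded_closedBall.subset Set.inter_subset_right)
  have hB : μH[(2 : ℝ)] ((L : Set (Euc d)) ∩ Metric.closedBall 0 R) < ⊤ := by
    have := hausdorffMeasure_lt_top_of_subset_submodule L (s := (L : Set (Euc d)) ∩
      Metric.closedBall 0 R) Set.inter_subset_left
      (Metric.isBounded_closedBall.subset Set.inter_subset_right)
    rwa [hL, Nat.cast_ofNat] at this
  have hbound : ∀ v ∈ (L : Set (Euc d)),
      sliceVol L W v ^ 2 ≤ (Metric.closedBall 0 R).indicator (fun _ => M ^ 2) v := by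
    intro v hv
    by_cases hvR : ‖v‖ ≤ R
    · rw [Set.indicator_of_mem (mem_closedBall_zero_iff.2 hvR)]
      exact pow_le_pow_left' (sliceVol_le_of_subset_closedBall L hR v) 2
    · rw [sliceVol_eq_zero_of_subset_closedBall L hR hv (not_le.1 hvR)]
      simp
  calc sliceSqIntegral L W
      ≤ ∫⁻ v in (L : Set (Euc d)), (Metric.closedBall 0 R).indicator (fun _ => M ^ 2) v
          ∂μH[(2 : ℝ)] := setLIntegral_mono' L.closed_of_finiteDimensional.measurableSet hbound
    _ = M ^ 2 * μH[(2 : ℝ)] ((L : Set (Euc d)) ∩ Metric.closedBall 0 R) := by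
        rw [lintegral_indicator measurableSet_closedBall, Measure.restrict_restrict
          measurableSet_closedBall, setLIntegral_const, Set.inter_comm]
    _ < ⊤ := ENNReal.mul_lt_top (ENNReal.pow_lt_top hM) hB

end Slice

section ErrorTerm

variable (L : Submodule ℝ (Euc d))

theorem ftErr_le_lintegral_sliceVol_sq_tsub {W Wout Win : Set (Euc d)} {δ : ℝ}
    (hout : ∀ b : Euc d, ‖b‖ ≤ 4 * δ → b +ᵥ W ⊆ Wout)
    (hin : ∀ b : Euc d, ‖b‖ ≤ 4 * δ → b +ᵥ Win ⊆ innerParallel W (3 * δ)) :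
    ftErr d L W δ (projL L '' W)
      ≤ ∫⁻ v in (L : Set (Euc d)), sliceVol L Wout v ^ 2 - sliceVol L Win v ^ 2 ∂μH[(2 : ℝ)] := by
  refine (lintegral_mono fun v => ?_).trans (lintegral_mono_set ?_)
  · refine tsub_le_tsub (pow_le_pow_left' (iSup₂_le fun w hw => ?_) 2)
      (pow_le_pow_left' (le_iInf₂ fun w hw => ?_) 2)
    · have hvw : ‖v - w‖ ≤ 4 * δ := by rw [← dist_eq_norm']; exact hw.1
      simpa using sliceVol_le_of_vadd_subset L (hout _ hvw) w
    · have hwv : ‖w - v‖ ≤ 4 * δ := by rw [← dist_eq_norm]; exact hw.1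
      simpa using sliceVol_le_of_vadd_subset L (hin _ hwv) v
  · rintro _ ⟨y, -, rfl⟩
    exact Submodule.coe_mem _

theorem ftErr_le_of_closedBall_subset (hL : Module.finrank ℝ L = 2) {W : Set (Euc d)}
    (hWb : Bornology.IsBounded W) (hWconv : Convex ℝ W) {x : Euc d} {r δ : ℝ}
    (hball : Metric.closedBall x r ⊆ W) (hδ : 0 < δ) (hδr : 7 * δ < r) :
    ftErr d L W δ (projL L '' W)
      ≤ ENNReal.ofReal ((2 * d - 2 : ℕ) * 2 ^ (2 * d - 2) * (7 * δ / r)) * sliceSqIntegral L W := by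
  have hd := two_le_of_finrank_eq_two L hL
  have hr : 0 < r := by linarith
  have hs₀ : 0 < 7 * δ / r := by positivity
  have hs₁ : 7 * δ / r < 1 := (div_lt_one hr).2 hδr
  set s := 7 * δ / r
  set n := 2 * d - 2
  set Wout := AffineMap.homothety x (1 + s) '' W
  set Win := AffineMap.homothety x (1 - s) '' W
  have hout : ∀ b : Euc d, ‖b‖ ≤ 4 * δ → b +ᵥ W ⊆ Wout := fun b hb =>
    hWconv.vadd_subset_homothety_of_closedBall_subset hball hr (by positivity) (by linarith)
  have hin : ∀ b : Euc d, ‖b‖ ≤ 4 * δ → b +ᵥ Win ⊆ innerParallel W (3 * δ) := by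
    rintro b hb _ ⟨_, ⟨y, hy, rfl⟩, rfl⟩
    refine (Metric.closedBall_subset_closedBall' ?_).trans
      (hWconv.closedBall_homothety_subset_of_closedBall_subset hball (by positivity) hδr.le hy)
    change 3 * δ + dist (b + AffineMap.homothety x (1 - s) y) (AffineMap.homothety x (1 - s) y)
      ≤ 7 * δ
    rw [dist_add_self_left]
    linarith
  have hWin : Win ⊆ Wout := by
    have hin₀ := hin 0 (by rw [norm_zero]; positivity)
    have hout₀ := hout 0 (by rw [norm_zero]; positivity)
    rw [zero_vadd] at hin₀ hout₀
    exact hin₀.trans fun y hy => hout₀ (hy (Metric.mem_closedBall_self (by positivity)))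
  have hI := sliceSqIntegral_lt_top L hL hWb
  have hscale : ∀ c : ℝ, 0 < c →
      sliceSqIntegral L (AffineMap.homothety x c '' W)
        = ENNReal.ofReal (c ^ n) * sliceSqIntegral L W := fun c hc => by
    rw [sliceSqIntegral_homothety_image L hd W x hc.ne', Real.enorm_eq_ofReal hc.le,
      ENNReal.ofReal_pow hc.le]
  calc ftErr d L W δ (projL L '' W)
      ≤ ∫⁻ v in (L : Set (Euc d)), sliceVol L Wout v ^ 2 - sliceVol L Win v ^ 2 ∂μH[(2 : ℝ)] :=
        ftErr_le_lintegral_sliceVol_sq_tsub L hout hin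
    _ ≤ sliceSqIntegral L Wout - sliceSqIntegral L Win :=
        lintegral_tsub_le_tsub_lintegral (fun v => pow_le_pow_left' (sliceVol_mono L hWin v) 2)
          (by
            change sliceSqIntegral L Win ≠ ⊤
            rw [hscale _ (by linarith)]
            exact ENNReal.mul_ne_top ENNReal.ofReal_ne_top hI.ne)
    _ = ENNReal.ofReal ((1 + s) ^ n - (1 - s) ^ n) * sliceSqIntegral L W := by
        rw [hscale _ (by linarith), hscale _ (by linarith), ← ENNReal.sub_mul fun _ _ => hI.ne,
          ENNReal.ofReal_sub _ (by positivity)]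
    _ ≤ ENNReal.ofReal (n * 2 ^ n * s) * sliceSqIntegral L W := by
        gcongr
        exact pow_one_add_sub_pow_one_sub_le n hs₀.le hs₁.le

theorem exists_ftErr_le (hL : Module.finrank ℝ L = 2) {W : Set (Euc d)}
    (hWb : Bornology.IsBounded W) (hWconv : Convex ℝ W) (hWint : (interior W).Nonempty) :
    ∃ C > (0 : ℝ), ∃ δ₀ > (0 : ℝ), ∀ δ, 0 < δ → δ < δ₀ →
      ftErr d L W δ (projL L '' W) ≤ ENNReal.ofReal (C * δ) := by
  obtain ⟨x, hx⟩ := hWint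
  obtain ⟨r, hr, hball⟩ := Metric.nhds_basis_closedBall.mem_iff.1 (mem_interior_iff_mem_nhds.1 hx)
  set I := sliceSqIntegral L W
  set n := 2 * d - 2
  have hI : I ≠ ⊤ := (sliceSqIntegral_lt_top L hL hWb).ne
  refine ⟨n * 2 ^ n * 7 / r * I.toReal + 1, by positivity, r / 7, by positivity,
    fun δ hδ hδr => ?_⟩
  calc ftErr d L W δ (projL L '' W)
      ≤ ENNReal.ofReal (n * 2 ^ n * (7 * δ / r)) * I :=
        ftErr_le_of_closedBall_subset L hL hWb hWconv hball hδ (by linarith)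
    _ = ENNReal.ofReal (n * 2 ^ n * 7 / r * I.toReal * δ) := by
        rw [← ENNReal.ofReal_toReal hI, ← ENNReal.ofReal_mul (by positivity),
          ENNReal.toReal_ofReal ENNReal.toReal_nonneg]
        ring_nf
    _ ≤ ENNReal.ofReal ((n * 2 ^ n * 7 / r * I.toReal + 1) * δ) :=
        ENNReal.ofReal_le_ofReal (by nlinarith)

end ErrorTerm

theorem uniform_error_bound_general
    (d : ℕ)
    (W : Set (Euc d)) (hWcomp : IsCompact W) (hWconv : Convex ℝ W)
    (hWint : (interior W).Nonempty)
    (L : Submodule ℝ (Euc d)) (hL : Module.finrank ℝ L = 2)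
    (δ : ℝ → ℝ) (hδpos : ∀ t > 0, 0 < δ t) (hδ0 : Tendsto δ atTop (𝓝 0)) :
    (∀ t > 0, ∀ A : Set (Euc d), MeasurableSet A → A ⊆ projL L '' W →
      ftErr d L W (δ t) A ≤ ftErr d L W (δ t) (projL L '' W)) ∧
    ∃ C > (0 : ℝ), ∃ t0 : ℝ, ∀ t ≥ t0,
      ftErr d L W (δ t) (projL L '' W) ≤ ENNReal.ofReal (C * δ t) := by
  refine ⟨fun t _ A _ hA => lintegral_mono_set hA, ?_⟩
  obtain ⟨C, hC, δ₀, hδ₀, hbound⟩ := exists_ftErr_le L hL hWcomp.isBounded hWconv hWint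
  obtain ⟨t0, ht0⟩ := eventually_atTop.1 (hδ0.eventually_lt_const hδ₀)
  exact ⟨C, hC, max t0 1, fun t ht =>
    hbound _ (hδpos t (by linarith [le_max_right t0 1])) (ht0 t (le_of_max_le_left ht))⟩

/-- **Lemma 5 (Uniform error bound).** `0 ≤ f_t(A) ≤ f_t(W_L) = O(δ_t)` for all Borel
`A ⊆ W_L` as `δ_t → 0`. -/
theorem uniform_error_bound
    (d : ℕ) (hd : 3 ≤ d)
    (W : Set (Euc d)) (hWcomp : IsCompact W) (hWconv : Convex ℝ W)
    (hWint : (interior W).Nonempty) (hWvol : volume W = 1)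
    (L : Submodule ℝ (Euc d)) (hL : Module.finrank ℝ L = 2)
    (δ : ℝ → ℝ) (hδpos : ∀ t > 0, 0 < δ t) (hδ0 : Tendsto δ atTop (𝓝 0)) :
    (∀ t > 0, ∀ A : Set (Euc d), MeasurableSet A → A ⊆ projL L '' W →
      ftErr d L W (δ t) A ≤ ftErr d L W (δ t) (projL L '' W)) ∧
    ∃ C > (0 : ℝ), ∃ t0 : ℝ, ∀ t ≥ t0,
      ftErr d L W (δ t) (projL L '' W) ≤ ENNReal.ofReal (C * δ t) :=
  uniform_error_bound_general d W hWcomp hWconv hWint L hL δ hδpos hδ0
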